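/- arXiv:1306.2059 — 2 statements merged into one kernel-verified Lean document; each statement's English description precedes it below -/
import Mathlib

section
/- Let M be an N×N complex matrix whose eigenvalues λ_1,...,λ_N satisfy λ_j = 0 if and only if j = 1, and let Π_M = λ_2⋯λ_N. Let v_1 span the kernel of M and let v_1* be the unique vector with M*v_1* = 0 and ⟨v_1, v_1*⟩ = 1. Then for every index i, det(M^{{i}})/Π_M = (v_1)_i · conjugate((v_1*)_i). -/
/-!
Since `0` is a simple root of the characteristic polynomial, its coefficient of `X`, which is
`±tr (adj M)` by Jacobi's formula, does not vanish. Hence `adj M ≠ 0`, so `M` has rank `N - 1`,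
and `M * adj M = adj M * M = 0` forces `adj M = c • v₁ wᵀ` with `w = conj v₁*`. Taking traces
and using `⟨v₁, v₁*⟩ = 1` gives `c = tr (adj M) = Π_M`, while `adj(M)ᵢᵢ = det M^{{i}}`.
-/

open Matrix BigOperators

/-- The principal submatrix of `M` obtained by deleting the rows and columns
indexed by the finite set `Δ`. -/
def mdel {V : Type*} [DecidableEq V] (M : Matrix V V ℂ) (Δ : Finset V) :
    Matrix {a // a ∉ Δ} {a // a ∉ Δ} ℂ :=
  M.submatrix Subtype.val Subtype.val

/-- `Π_M`, the product of the nonzero eigenvalues of `M` (when `0` is an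
eigenvalue of `M`): it equals `(-1)^{N-1}` times the coefficient of `λ` in the
characteristic polynomial of `M`. -/
noncomputable def prodNZ {N : ℕ} (M : Matrix (Fin N) (Fin N) ℂ) : ℂ :=
  (-1) ^ (N - 1) * (Matrix.charpoly M).coeff 1

open Polynomial

namespace Matrix

section CommRing

variable {R : Type*} [CommRing R] {n : Type*} [Fintype n] [DecidableEq n]

theorem derivative_det (A : Matrix n n R[X]) :
    derivative A.det = ∑ j, (A.updateCol j fun i => derivative (A i j)).det := by
  simp only [det_apply', map_sum, derivative_intCast_mul, derivative_prod_finset, Finset.mul_sum]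
  rw [Finset.sum_comm]
  refine Finset.sum_congr rfl fun j _ => Finset.sum_congr rfl fun σ _ => ?_
  rw [← Finset.mul_prod_erase _ _ (Finset.mem_univ j), updateCol_self, mul_comm (derivative _)]
  congr 2
  exact Finset.prod_congr rfl fun k hk => by rw [updateCol_ne (Finset.ne_of_mem_erase hk)]

theorem det_updateCol_single_self (A : Matrix n n R) (j : n) :
    (A.updateCol j (Pi.single j 1)).det = adjugate A j j := by
  rw [← det_transpose, ← updateRow_transpose, ← adjugate_apply, ← adjugate_transpose,
    transpose_apply]

theorem charpoly_coeff_one (M : Matrix n n R) :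
    M.charpoly.coeff 1 = (-1) ^ (Fintype.card n - 1) * trace (adjugate M) := by
  have hcoeff : M.charpoly.coeff 1 = (derivative M.charpoly).eval 0 := by
    simp [← coeff_zero_eq_eval_zero, coeff_derivative]
  have hcol : ∀ j, (eval 0) ∘ (fun i => derivative (charmatrix M i j)) = Pi.single j 1 := by
    intro j
    funext i
    rcases eq_or_ne i j with rfl | h
    · simp [charmatrix_apply_eq]
    · simp [h]
  have hzero : (charmatrix M).map (eval 0) = -M := by
    ext i k
    rcases eq_or_ne i k with rfl | h
    · simp [charmatrix_apply_eq]
    · simp [charmatrix_apply_ne _ _ _ h]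
  have hterm : ∀ j, ((charmatrix M).updateCol j fun i => derivative (charmatrix M i j)).det.eval 0
      = adjugate (-M) j j := by
    intro j
    rw [← coe_evalRingHom, RingHom.map_det, RingHom.mapMatrix_apply, map_updateCol,
      coe_evalRingHom, hzero, hcol, det_updateCol_single_self]
  rw [hcoeff, charpoly, derivative_det, eval_finsetSum, Finset.sum_congr rfl fun j _ => hterm j]
  change trace (adjugate (-M)) = _
  rw [← neg_one_smul R M, adjugate_smul, trace_smul, smul_eq_mul]

end CommRing

section Field

variable {K : Type*} [Field K] {n : Type*} [Fintype n]

theorem exists_eq_smul_of_mulVec_eq_zero {A : Matrix n n K}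
    (hrank : Fintype.card n ≤ A.rank + 1) {v u : n → K} (hv : A *ᵥ v = 0) (hv0 : v ≠ 0)
    (hu : A *ᵥ u = 0) : ∃ c : K, u = c • v := by
  have hker : Module.finrank K (LinearMap.ker A.mulVecLin) ≤ 1 := by
    have := LinearMap.finrank_range_add_finrank_ker A.mulVecLin
    rw [Module.finrank_fintype_fun_eq_card] at this
    change A.rank + _ = _ at this
    omega
  have hspan : Submodule.span K {v} = LinearMap.ker A.mulVecLin :=
    Submodule.eq_of_le_of_finrank_le
      ((Submodule.span_singleton_le_iff_mem _ _).mpr hv)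
      (by rwa [finrank_span_singleton hv0])
  obtain ⟨c, hc⟩ := Submodule.mem_span_singleton.mp (hspan ▸ hu : u ∈ Submodule.span K {v})
  exact ⟨c, hc.symm⟩

theorem exists_eq_smul_of_vecMul_eq_zero {A : Matrix n n K}
    (hrank : Fintype.card n ≤ A.rank + 1) {v u : n → K} (hv : v ᵥ* A = 0) (hv0 : v ≠ 0)
    (hu : u ᵥ* A = 0) : ∃ c : K, u = c • v := by
  rw [← mulVec_transpose] at hv hu
  exact exists_eq_smul_of_mulVec_eq_zero (by rwa [rank_transpose]) hv hv0 hu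

theorem le_rank_of_adjugate_ne_zero {m : ℕ} {M : Matrix (Fin (m + 1)) (Fin (m + 1)) K}
    (h : adjugate M ≠ 0) : m ≤ M.rank := by
  obtain ⟨i, j, hij⟩ : ∃ i j, adjugate M i j ≠ 0 := by
    by_contra! h'
    exact h (ext h')
  rw [adjugate_fin_succ_eq_det_submatrix] at hij
  have hminor : (M.submatrix j.succAbove i.succAbove).det ≠ 0 := right_ne_zero_of_mul hij
  calc m = (M.submatrix j.succAbove i.succAbove).rank := by
        rw [rank_of_isUnit _ ((isUnit_iff_isUnit_det _).mpr hminor.isUnit), Fintype.card_fin]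
    _ ≤ M.rank := rank_submatrix_le _ _ _

variable [DecidableEq n]

/-- `M * adj M = 0 = adj M * M`, so the columns of `adj M` lie in `ker M = span {v}` and its rows
in the left kernel `span {w}`. -/
theorem adjugate_eq_smul_vecMulVec {M : Matrix n n K} (hrank : Fintype.card n ≤ M.rank + 1)
    {v w : n → K} (hv : M *ᵥ v = 0) (hv0 : v ≠ 0) (hw : w ᵥ* M = 0) (hw0 : w ≠ 0) :
    ∃ c : K, adjugate M = c • vecMulVec v w := by
  have hdet : M.det = 0 := exists_mulVec_eq_zero_iff.mp ⟨v, hv0, hv⟩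
  have hcol : ∀ j, ∃ a : K, (fun i => adjugate M i j) = a • v := fun j =>
    exists_eq_smul_of_mulVec_eq_zero hrank hv hv0 <| by
      funext k
      simpa [mul_apply, mulVec, dotProduct, hdet] using congrFun (congrFun (mul_adjugate M) k) j
  have hrow : ∀ i, ∃ b : K, adjugate M i = b • w := fun i =>
    exists_eq_smul_of_vecMul_eq_zero hrank hw hw0 <| by
      funext k
      simpa [mul_apply, vecMul, dotProduct, hdet] using congrFun (congrFun (adjugate_mul M) i) k
  choose a ha using hcol
  choose b hb using hrow
  obtain ⟨i₀, hi₀⟩ := Function.ne_iff.mp hv0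
  refine ⟨b i₀ / v i₀, ext fun i j => ?_⟩
  have hcol_ij : adjugate M i j = a j * v i := by simpa using congrFun (ha j) i
  have hrow_i₀j : a j * v i₀ = b i₀ * w j := by
    simpa [← hcol_ij] using (congrFun (ha j) i₀).symm.trans (congrFun (hb i₀) j)
  rw [hcol_ij, smul_apply, vecMulVec_apply, smul_eq_mul, div_mul_eq_mul_div, eq_div_iff hi₀]
  linear_combination v i * hrow_i₀j

theorem adjugate_eq_trace_smul_vecMulVec {M : Matrix n n K}
    (hrank : Fintype.card n ≤ M.rank + 1) {v w : n → K} (hv : M *ᵥ v = 0) (hw : w ᵥ* M = 0)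
    (hvw : v ⬝ᵥ w = 1) : adjugate M = trace (adjugate M) • vecMulVec v w := by
  have hv0 : v ≠ 0 := by rintro rfl; simp at hvw
  have hw0 : w ≠ 0 := by rintro rfl; simp at hvw
  obtain ⟨c, hc⟩ := adjugate_eq_smul_vecMulVec hrank hv hv0 hw hw0
  rw [hc, trace_smul, trace_vecMulVec, hvw, smul_eq_mul, mul_one]

end Field

end Matrix

theorem det_mdel_singleton {n : ℕ} (M : Matrix (Fin (n + 1)) (Fin (n + 1)) ℂ) (i : Fin (n + 1)) :
    (mdel M {i}).det = adjugate M i i := by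
  let e : Fin n ≃ {a : Fin (n + 1) // a ∉ ({i} : Finset (Fin (n + 1)))} :=
    (finSuccAboveEquiv i).trans (Equiv.subtypeEquivRight fun a => by simp)
  have he : (mdel M {i}).submatrix e e = M.submatrix i.succAbove i.succAbove := rfl
  rw [← det_submatrix_equiv_self e, he, adjugate_fin_succ_eq_det_submatrix,
    Even.neg_one_pow ⟨i, rfl⟩, one_mul]

theorem prodNZ_eq_trace_adjugate {N : ℕ} (M : Matrix (Fin N) (Fin N) ℂ) :
    prodNZ M = trace (adjugate M) := by
  rw [prodNZ, charpoly_coeff_one, Fintype.card_fin, ← mul_assoc, ← mul_pow, neg_one_mul, neg_neg,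
    one_pow, one_mul]

theorem prodNZ_ne_zero {N : ℕ} {M : Matrix (Fin N) (Fin N) ℂ}
    (hmult : M.charpoly.rootMultiplicity 0 = 1) : prodNZ M ≠ 0 := by
  have htrail : M.charpoly.natTrailingDegree = 1 := by
    rw [← rootMultiplicity_eq_natTrailingDegree', hmult]
  have hcoeff : M.charpoly.coeff 1 ≠ 0 := by
    have := trailingCoeff_nonzero_iff_nonzero.mpr M.charpoly_monic.ne_zero
    rwa [trailingCoeff, htrail] at this
  exact mul_ne_zero (pow_ne_zero _ (neg_ne_zero.mpr one_ne_zero)) hcoeff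

theorem stmt2_general {N : ℕ} (M : Matrix (Fin N) (Fin N) ℂ)
    (hmult : (Matrix.charpoly M).rootMultiplicity 0 = 1)
    (v1 v1star : Fin N → ℂ)
    (hv1 : M.mulVec v1 = 0)
    (hv1star : Mᴴ.mulVec v1star = 0)
    (hinner : ∑ i, v1 i * star (v1star i) = 1) :
    ∀ i : Fin N, (mdel M {i}).det / prodNZ M = v1 i * star (v1star i) := by
  intro i
  obtain ⟨n, rfl⟩ : ∃ n, N = n + 1 := ⟨N - 1, (Nat.succ_pred_eq_of_pos i.pos).symm⟩
  have hP0 := prodNZ_ne_zero hmult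
  rw [prodNZ_eq_trace_adjugate] at hP0 ⊢
  have hrank : Fintype.card (Fin (n + 1)) ≤ M.rank + 1 := by
    have := le_rank_of_adjugate_ne_zero fun h => hP0 (by rw [h, trace_zero])
    rw [Fintype.card_fin]
    omega
  have hleft : star v1star ᵥ* M = 0 := by
    simpa [star_mulVec] using congrArg star hv1star
  have hadj := adjugate_eq_trace_smul_vecMulVec hrank hv1 hleft hinner
  rw [det_mdel_singleton, congrFun (congrFun hadj i) i, Matrix.smul_apply, vecMulVec_apply,
    smul_eq_mul, mul_div_cancel_left₀ _ hP0]
  rfl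

/-- Theorem 2: if `0` is an eigenvalue of `M` of algebraic multiplicity exactly one
(i.e. `λ_j = 0` iff `j = 1`), `v₁` spans the kernel of `M`, and `v₁*` is the vector
with `M^* v₁* = 0` and `⟨v₁, v₁*⟩ = 1`, then
`det(M^{{i}}) / Π_M = (v₁)_i ⋅ conj((v₁*)_i)` for every index `i`. -/
theorem stmt2 {N : ℕ} (M : Matrix (Fin N) (Fin N) ℂ)
    (hmult : (Matrix.charpoly M).rootMultiplicity 0 = 1)
    (v1 v1star : Fin N → ℂ)
    (hv1 : M.mulVec v1 = 0) (hv1ne : v1 ≠ 0)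
    (hv1star : Mᴴ.mulVec v1star = 0)
    (hinner : ∑ i, v1 i * star (v1star i) = 1) :
    ∀ i : Fin N, (mdel M {i}).det / prodNZ M = v1 i * star (v1star i) :=
  stmt2_general M hmult v1 v1star hv1 hv1star hinner
end

section
/- Let Q be a Q-matrix on a finite state space such that there is a state accessible from every other state. Then 0 is a simple eigenvalue of Q, every nonzero real eigenvalue of −Q is strictly positive, and the real part of every eigenvalue of −Q is nonnegative. -/
open Matrix

/-!
The diagonal entry `-Q k k` of `-Q` equals `∑ j ≠ k, |Q k j|`, so every Gershgorin disc of `-Q`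
lies in the closed right half-plane; this gives the statements on the eigenvalues of `-Q`.

For the simplicity of `0`, a vector `v` with `Q v = 0` satisfies the strong maximum principle:
`(Q v) x = ∑ b, Q x b (v b - v x)` is a sum of nonpositive terms at a maximum `x` of `v`, so the
maximum propagates along every edge `Q x b > 0`, hence to the state `y` accessible from everywhere.
The same holds for the minimum, so `v` is constant and `ker Q` is spanned by `1`. If `Q² w = 0`
then `Q w = c • 1`, and evaluating `Q w` at a maximum and at a minimum of `w` gives `c ≤ 0 ≤ c`.
Thus `ker Q² = ker Q`, and the generalized eigenspace of `0` is the line spanned by `1`.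
-/

namespace Module.End

theorem maxGenEigenspace_zero_eq_ker {K M : Type*} [Field K] [AddCommGroup M]
    [Module K M] {f : End K M} (h : LinearMap.ker (f ^ 2) ≤ LinearMap.ker f) :
    f.maxGenEigenspace 0 = LinearMap.ker f := by
  have hker : LinearMap.ker (f ^ 1) = LinearMap.ker (f ^ 2) := by
    refine le_antisymm ?_ (by rwa [pow_one])
    rw [pow_one, sq, mul_eq_comp]
    exact LinearMap.ker_le_ker_comp f f
  have hstable : ∀ k, LinearMap.ker f = LinearMap.ker (f ^ (1 + k)) := by
    simpa only [pow_one] using ker_pow_constant hker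
  ext v
  simp only [mem_maxGenEigenspace, zero_smul, sub_zero]
  refine ⟨fun ⟨k, hk⟩ => ?_, fun hv => ⟨1, by simpa using hv⟩⟩
  rw [hstable k, LinearMap.mem_ker, pow_add, mul_apply, hk, map_zero]

end Module.End

theorem Polynomial.rootMultiplicity_zero_map {R S : Type*} [CommRing R] [CommRing S]
    {f : R →+* S} (hf : Function.Injective f) (p : Polynomial R) :
    (p.map f).rootMultiplicity 0 = p.rootMultiplicity 0 := by
  rw [eq_rootMultiplicity_map hf, map_zero]

theorem Matrix.re_nonneg_of_hasEigenvalue {𝕜 n : Type*} [RCLike 𝕜] [Fintype n] [DecidableEq n]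
    {A : Matrix n n 𝕜} (hdom : ∀ k, ∑ j ∈ Finset.univ.erase k, ‖A k j‖ ≤ RCLike.re (A k k))
    {μ : 𝕜} (hμ : Module.End.HasEigenvalue (toLin' A) μ) : 0 ≤ RCLike.re μ := by
  obtain ⟨k, hk⟩ := eigenvalue_mem_ball hμ
  rw [mem_closedBall_iff_norm] at hk
  have hre := (abs_le.mp ((RCLike.abs_re_le_norm (μ - A k k)).trans hk)).1
  rw [map_sub] at hre
  linarith [hdom k]

structure Matrix.IsQMatrix {V : Type*} [Fintype V] (Q : Matrix V V ℝ) : Prop where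
  nonneg_of_ne : ∀ a b, a ≠ b → 0 ≤ Q a b
  sum_row_eq_zero : ∀ a, ∑ b, Q a b = 0

namespace Matrix.IsQMatrix

variable {V : Type*} [Fintype V] {Q : Matrix V V ℝ}

theorem mulVec_one (hQ : Q.IsQMatrix) : Q *ᵥ 1 = 0 := by
  ext a
  simp [mulVec, dotProduct, hQ.sum_row_eq_zero a]

theorem mulVec_apply_eq_sum_mul_sub (hQ : Q.IsQMatrix) (v : V → ℝ) (x : V) :
    (Q *ᵥ v) x = ∑ b, Q x b * (v b - v x) := by
  simp only [mulVec, dotProduct, mul_sub, Finset.sum_sub_distrib, ← Finset.sum_mul,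
    hQ.sum_row_eq_zero, zero_mul, sub_zero]

theorem mul_sub_nonpos (hQ : Q.IsQMatrix) {v : V → ℝ} {x : V} (hx : ∀ b, v b ≤ v x) (b : V) :
    Q x b * (v b - v x) ≤ 0 := by
  rcases eq_or_ne x b with rfl | hxb
  · simp
  · exact mul_nonpos_of_nonneg_of_nonpos (hQ.nonneg_of_ne x b hxb) (by linarith [hx b])

theorem mulVec_apply_nonpos_of_isMax (hQ : Q.IsQMatrix) {v : V → ℝ} {x : V}
    (hx : ∀ b, v b ≤ v x) : (Q *ᵥ v) x ≤ 0 := by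
  rw [hQ.mulVec_apply_eq_sum_mul_sub]
  exact Finset.sum_nonpos fun b _ => hQ.mul_sub_nonpos hx b

theorem eq_of_mulVec_apply_eq_zero (hQ : Q.IsQMatrix) {v : V → ℝ} {x b : V}
    (hx : ∀ b, v b ≤ v x) (h0 : (Q *ᵥ v) x = 0) (hb : 0 < Q x b) : v b = v x := by
  rw [hQ.mulVec_apply_eq_sum_mul_sub] at h0
  have := (Finset.sum_eq_zero_iff_of_nonpos fun b _ => hQ.mul_sub_nonpos hx b).mp h0 b
    (Finset.mem_univ b)
  linarith [(mul_eq_zero.mp this).resolve_left hb.ne']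

theorem eq_of_reflTransGen (hQ : Q.IsQMatrix) {v : V → ℝ} (hv : Q *ᵥ v = 0) {x z : V}
    (hx : ∀ b, v b ≤ v x) (hz : Relation.ReflTransGen (fun a b => 0 < Q a b) x z) : v z = v x := by
  induction hz with
  | refl => rfl
  | tail _ hbc ih =>
    exact (hQ.eq_of_mulVec_apply_eq_zero (ih ▸ hx) (congrFun hv _) hbc).trans ih

theorem eq_of_mulVec_eq_zero (hQ : Q.IsQMatrix) {y : V}
    (hy : ∀ x, Relation.ReflTransGen (fun a b => 0 < Q a b) x y) {v : V → ℝ} (hv : Q *ᵥ v = 0)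
    (x : V) : v x = v y := by
  have : Nonempty V := ⟨y⟩
  obtain ⟨xmax, hmax⟩ := Finite.exists_max v
  obtain ⟨xmin, hmin⟩ := Finite.exists_max (-v)
  have hv' : Q *ᵥ (-v) = 0 := by rw [mulVec_neg, hv, neg_zero]
  have h1 := hQ.eq_of_reflTransGen hv hmax (hy xmax)
  have h2 := hQ.eq_of_reflTransGen hv' hmin (hy xmin)
  simp only [Pi.neg_apply, neg_le_neg_iff, neg_inj] at hmin h2
  linarith [hmax x, hmin x]

theorem eq_zero_of_mulVec_eq_const (hQ : Q.IsQMatrix) [Nonempty V] {v : V → ℝ} {c : ℝ}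
    (hv : Q *ᵥ v = c • 1) : c = 0 := by
  obtain ⟨xmax, hmax⟩ := Finite.exists_max v
  obtain ⟨xmin, hmin⟩ := Finite.exists_max (-v)
  have hv' : Q *ᵥ (-v) = (-c) • 1 := by rw [mulVec_neg, hv, neg_smul]
  have h1 := hQ.mulVec_apply_nonpos_of_isMax hmax
  have h2 := hQ.mulVec_apply_nonpos_of_isMax hmin
  simp only [hv, hv', Pi.smul_apply, Pi.one_apply, smul_eq_mul, mul_one] at h1 h2
  linarith

theorem ker_toLin'_eq_span_one [DecidableEq V] (hQ : Q.IsQMatrix) {y : V}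
    (hy : ∀ x, Relation.ReflTransGen (fun a b => 0 < Q a b) x y) :
    LinearMap.ker (toLin' Q) = ℝ ∙ 1 := by
  ext v
  rw [LinearMap.mem_ker, toLin'_apply, Submodule.mem_span_singleton]
  constructor
  · intro hv
    exact ⟨v y, funext fun x => by simp [hQ.eq_of_mulVec_eq_zero hy hv x]⟩
  · rintro ⟨c, rfl⟩
    rw [mulVec_smul, hQ.mulVec_one, smul_zero]

theorem ker_toLin'_sq_le [DecidableEq V] (hQ : Q.IsQMatrix) {y : V}
    (hy : ∀ x, Relation.ReflTransGen (fun a b => 0 < Q a b) x y) :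
    LinearMap.ker (toLin' Q ^ 2) ≤ LinearMap.ker (toLin' Q) := by
  have : Nonempty V := ⟨y⟩
  intro v hv
  rw [LinearMap.mem_ker, sq, Module.End.mul_apply, ← LinearMap.mem_ker,
    hQ.ker_toLin'_eq_span_one hy, Submodule.mem_span_singleton] at hv
  obtain ⟨c, hc⟩ := hv
  rw [toLin'_apply] at hc
  rw [LinearMap.mem_ker, toLin'_apply, ← hc, hQ.eq_zero_of_mulVec_eq_const hc.symm, zero_smul]

theorem rootMultiplicity_zero_charpoly [DecidableEq V] (hQ : Q.IsQMatrix) {y : V}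
    (hy : ∀ x, Relation.ReflTransGen (fun a b => 0 < Q a b) x y) :
    Q.charpoly.rootMultiplicity 0 = 1 := by
  rw [Polynomial.rootMultiplicity_eq_natTrailingDegree', ← charpoly_toLin',
    ← LinearMap.finrank_maxGenEigenspace_zero_eq,
    Module.End.maxGenEigenspace_zero_eq_ker (hQ.ker_toLin'_sq_le hy), hQ.ker_toLin'_eq_span_one hy]
  exact finrank_span_singleton (Function.ne_iff.mpr ⟨y, one_ne_zero⟩)

theorem re_nonneg_of_isRoot_charpoly_neg {𝕜 : Type*} [RCLike 𝕜] [DecidableEq V]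
    (hQ : Q.IsQMatrix) {μ : 𝕜} (hμ : ((-Q).map (algebraMap ℝ 𝕜)).charpoly.IsRoot μ) :
    0 ≤ RCLike.re μ := by
  refine re_nonneg_of_hasEigenvalue (A := (-Q).map (algebraMap ℝ 𝕜)) (fun k => le_of_eq ?_)
    (by rwa [Module.End.hasEigenvalue_iff_isRoot_charpoly, charpoly_toLin'])
  have hoff : ∀ j ∈ Finset.univ.erase k, ‖(-Q).map (algebraMap ℝ 𝕜) k j‖ = Q k j := by
    intro j hj
    simp [abs_of_nonneg (hQ.nonneg_of_ne k j (Finset.ne_of_mem_erase hj).symm)]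
  rw [Finset.sum_congr rfl hoff, Finset.sum_erase_eq_sub (Finset.mem_univ k), hQ.sum_row_eq_zero]
  simp

end Matrix.IsQMatrix

/-- Let `Q` be a `Q`-matrix on a finite state space (nonnegative off-diagonal
entries, rows summing to `0`) such that some state is accessible from every state.
Then `0` is a simple eigenvalue of `Q` (its algebraic multiplicity in the
characteristic polynomial over `ℂ` is `1`), every nonzero real eigenvalue of `-Q` is
strictly positive, and every (complex) eigenvalue of `-Q` has nonnegative real
part. -/
theorem stmt19 {V : Type*} [Fintype V] [DecidableEq V] (Q : Matrix V V ℝ)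
    (hoff : ∀ a b, a ≠ b → 0 ≤ Q a b) (hrow : ∀ a, ∑ b, Q a b = 0)
    (hacc : ∃ y : V, ∀ x : V, Relation.ReflTransGen (fun a b => 0 < Q a b) x y) :
    ((Matrix.charpoly (Q.map (Complex.ofReal))).rootMultiplicity 0 = 1) ∧
    (∀ μ : ℝ, (Matrix.charpoly (-Q)).IsRoot μ → μ ≠ 0 → 0 < μ) ∧
    (∀ μ : ℂ, (Matrix.charpoly ((-Q).map (Complex.ofReal))).IsRoot μ → 0 ≤ μ.re) := by
  have hQ : Q.IsQMatrix := ⟨hoff, hrow⟩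
  obtain ⟨y, hy⟩ := hacc
  refine ⟨?_, fun μ hμ hμ0 => ?_, fun μ hμ => hQ.re_nonneg_of_isRoot_charpoly_neg hμ⟩
  · have h := hQ.rootMultiplicity_zero_charpoly hy
    rwa [← Polynomial.rootMultiplicity_zero_map Complex.ofRealHom.injective, ← charpoly_map] at h
  · exact (hQ.re_nonneg_of_isRoot_charpoly_neg (𝕜 := ℝ) hμ).lt_of_ne' hμ0
end
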